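/- Let (ξ_n)_{n=1}^∞ be a sequence of independent nonnegative random variables on a probability space. Then almost surely liminf_{n→∞} ξ_n ≤ liminf_{n→∞} E(ξ_n), where expectations are taken in [0,∞]. -/

import Mathlib

open MeasureTheory Filter Metric Set Topology
open scoped ENNReal

noncomputable section

/-- The topological support of a measure on a metric space. -/
def msupport {X : Type*} [PseudoMetricSpace X] [MeasurableSpace X] (μ : Measure X) : Set X :=
  {x | ∀ r : ℝ, 0 < r → 0 < μ (ball x r)}

/-- The lower local dimension of a measure at a point,
`liminf_{r → 0⁺} log μ(B(x,r)) / log r`, valued in `ℝ≥0∞`. -/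
def dimLocLower {X : Type*} [PseudoMetricSpace X] [MeasurableSpace X]
    (μ : Measure X) (x : X) : ℝ≥0∞ :=
  Filter.liminf
    (fun r : ℝ => ENNReal.ofReal (Real.log (μ (ball x r)).toReal / Real.log r)) (𝓝[>] (0:ℝ))

/-- The upper local dimension of a measure at a point. -/
def dimLocUpper {X : Type*} [PseudoMetricSpace X] [MeasurableSpace X]
    (μ : Measure X) (x : X) : ℝ≥0∞ :=
  Filter.limsup
    (fun r : ℝ => ENNReal.ofReal (Real.log (μ (ball x r)).toReal / Real.log r)) (𝓝[>] (0:ℝ))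

/-- The upper Hausdorff dimension of a measure: the essential supremum of the
lower local dimension. -/
def dimHUpper {X : Type*} [PseudoMetricSpace X] [MeasurableSpace X] (μ : Measure X) : ℝ≥0∞ :=
  essSup (fun x => dimLocLower μ x) μ

/-- The random covering set `E_r(ω) = limsup_k B(ω_k, r_k)`. -/
def coverSet {X : Type*} [PseudoMetricSpace X] (ω : ℕ → X) (r : ℕ → ℝ) : Set X :=
  ⋂ n : ℕ, ⋃ k : ℕ, ⋃ _ : n ≤ k, ball (ω k) (r k)

/-- `s₂(r) = inf {s > 0 | ∑ r_k ^ s < ∞}`, with `inf ∅ = ∞`. -/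
def sTwo (r : ℕ → ℝ) : ℝ≥0∞ :=
  ⨅ (s : ℝ) (_ : 0 < s) (_ : Summable fun k => r k ^ s), ENNReal.ofReal s

/-- `P` is the countable product `μ^ℕ` of copies of the probability measure `μ`:
it gives every finite-dimensional cylinder the product measure. -/
def IsProductMeasure {X : Type*} [MeasurableSpace X]
    (P : Measure (ℕ → X)) (μ : Measure X) : Prop :=
  ∀ (n : ℕ) (S : Fin n → Set X), (∀ i, MeasurableSet (S i)) →
    P {ω | ∀ i : Fin n, ω (i : ℕ) ∈ S i} = ∏ i, μ (S i)

/-- The `t`-energy `I_t(ν) = ∬ |x-y|^{-t} dν(y) dν(x)`. -/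
def energy {X : Type*} [EMetricSpace X] [MeasurableSpace X] (t : ℝ) (ν : Measure X) : ℝ≥0∞ :=
  ∫⁻ x, ∫⁻ y, edist x y ^ (-t) ∂ν ∂ν

/-- The `t`-potential `φ^t_ν(y) = ∫ |y-x|^{-t} dν(x)`. -/
def potential {X : Type*} [EMetricSpace X] [MeasurableSpace X]
    (t : ℝ) (ν : Measure X) (y : X) : ℝ≥0∞ :=
  ∫⁻ x, edist y x ^ (-t) ∂ν

/-- The `t`-capacity of a set. -/
def capacity {X : Type*} [MetricSpace X] [MeasurableSpace X] (t : ℝ) (A : Set X) : ℝ≥0∞ :=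
  ⨆ (σ : Measure X) (_ : IsProbabilityMeasure σ) (_ : msupport σ ⊆ A), (energy t σ)⁻¹

/-- `μ` is `(C,s)`-Frostman: `μ(B(x,r)) ≤ C r^s` for all `x` and `r > 0`. -/
def IsFrostman {X : Type*} [PseudoMetricSpace X] [MeasurableSpace X]
    (μ : Measure X) (C s : ℝ) : Prop :=
  ∀ x, ∀ r : ℝ, 0 < r → μ (ball x r) ≤ ENNReal.ofReal (C * r ^ s)

end

/-!
Fix `c > liminf E ξₙ` and `c'` strictly in between. Along the infinitely many `n` with
`E ξₙ < c'`, Markov's inequality gives `P (ξₙ < c) ≥ 1 - c'/c > 0`, so the independent events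
`{ξₙ < c}` have divergent probability sum, and by the second Borel–Cantelli lemma almost surely
infinitely many of them occur; hence `liminf ξₙ ≤ c` a.s. Letting `c` decrease to
`liminf E ξₙ` along a sequence gives the claim.
-/

open ProbabilityTheory

namespace ENNReal

theorem tsum_eq_top_of_frequently_le {a : ℕ → ℝ≥0∞} {δ : ℝ≥0∞} (hδ : 0 < δ)
    (h : ∃ᶠ n in atTop, δ ≤ a n) : ∑' n, a n = ∞ := by
  by_contra hsum
  obtain ⟨n, hδn, hn⟩ :=
    (h.and_eventually ((tendsto_atTop_zero_of_tsum_ne_top hsum).eventually_lt_const hδ)).exists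
  exact hn.not_ge hδn

end ENNReal

section

variable {α : Type*} [LinearOrder α] [TopologicalSpace α] [OrderTopology α] [DenselyOrdered α]
  [FirstCountableTopology α] {Ω : Type*} [MeasurableSpace Ω] {P : Measure Ω}

theorem ae_le_of_forall_lt_ae_le {f : Ω → α} {a : α} (h : ∀ c, a < c → ∀ᵐ ω ∂P, f ω ≤ c) :
    ∀ᵐ ω ∂P, f ω ≤ a := by
  by_cases ha : ∃ y, a < y
  · obtain ⟨y, hay⟩ := ha
    obtain ⟨u, -, hu, hua⟩ := exists_seq_strictAnti_tendsto' hay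
    filter_upwards [ae_all_iff.2 fun n => h (u n) (hu n).1] with ω hω
    exact ge_of_tendsto' hua hω
  · simp only [not_exists, not_lt] at ha
    exact .of_forall fun ω => ha (f ω)

end

section

variable {Ω : Type*} [MeasurableSpace Ω] {P : Measure Ω}

theorem one_sub_lintegral_div_le_measure_lt [IsProbabilityMeasure P] {f : Ω → ℝ≥0∞}
    (hf : Measurable f) {c : ℝ≥0∞} (hc0 : c ≠ 0) (hc : c ≠ ∞) :
    1 - (∫⁻ ω, f ω ∂P) / c ≤ P {ω | f ω < c} := by
  have hmarkov : P {ω | c ≤ f ω} ≤ (∫⁻ ω, f ω ∂P) / c :=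
    meas_ge_le_lintegral_div hf.aemeasurable hc0 hc
  have hcompl : {ω | f ω < c} = {ω | c ≤ f ω}ᶜ := by
    ext ω
    simp
  rw [hcompl, prob_compl_eq_one_sub (s := {ω | c ≤ f ω}) (hf measurableSet_Ici)]
  exact tsub_le_tsub_left hmarkov 1

theorem ae_frequently_mem_of_frequently_le_measure {s : ℕ → Set Ω}
    (hsm : ∀ n, MeasurableSet (s n)) (hs : iIndepSet s P) {δ : ℝ≥0∞} (hδ : 0 < δ)
    (hfreq : ∃ᶠ n in atTop, δ ≤ P (s n)) : ∀ᵐ ω ∂P, ∃ᶠ n in atTop, ω ∈ s n := by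
  have : IsProbabilityMeasure P := hs.isProbabilityMeasure
  have hlimsup : P (limsup s atTop) = 1 :=
    measure_limsup_eq_one hsm hs (ENNReal.tsum_eq_top_of_frequently_le hδ hfreq)
  have hae : ∀ᵐ ω ∂P, ω ∈ limsup s atTop := by
    rw [ae_mem_iff_measure_eq (MeasurableSet.measurableSet_limsup hsm).nullMeasurableSet,
      hlimsup, measure_univ]
  simpa only [mem_limsup_iff_frequently_mem] using hae

theorem ae_liminf_le_of_liminf_lintegral_lt {ξ : ℕ → Ω → ℝ≥0∞} (hmeas : ∀ n, Measurable (ξ n))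
    (hind : iIndepFun ξ P) {c : ℝ≥0∞} (hc : liminf (fun n => ∫⁻ ω, ξ n ω ∂P) atTop < c) :
    ∀ᵐ ω ∂P, liminf (fun n => ξ n ω) atTop ≤ c := by
  have : IsProbabilityMeasure P := hind.isProbabilityMeasure
  rcases eq_or_ne c ∞ with rfl | hcT
  · exact .of_forall fun _ => le_top
  obtain ⟨c', hc', hc'c⟩ := exists_between hc
  have hc0 : c ≠ 0 := (hc'c.trans_le' bot_le).ne'
  have hsm : ∀ n, MeasurableSet {ω | ξ n ω < c} := fun n => hmeas n measurableSet_Iio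
  have hindep : iIndepSet (fun n => {ω | ξ n ω < c}) P := by
    rw [iIndepSet_iff_meas_biInter hsm]
    exact fun t => hind.measure_inter_preimage_eq_mul t (sets := fun _ => Iio c)
      fun _ _ => measurableSet_Iio
  have hδ : 0 < 1 - c' / c := by
    rwa [tsub_pos_iff_lt, ENNReal.div_lt_iff (.inl hc0) (.inl hcT), one_mul]
  have hfreq : ∃ᶠ n in atTop, 1 - c' / c ≤ P {ω | ξ n ω < c} :=
    (frequently_lt_of_liminf_lt (by isBoundedDefault) hc').mono fun n hn =>
      (tsub_le_tsub_left (ENNReal.div_le_div_right hn.le c) 1).trans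
        (one_sub_lintegral_div_le_measure_lt (hmeas n) hc0 hcT)
  filter_upwards [ae_frequently_mem_of_frequently_le_measure hsm hindep hδ hfreq] with ω hω
  exact liminf_le_of_frequently_le (hω.mono fun n h => h.le)

end

theorem stmt8_general {Ω : Type*} [MeasurableSpace Ω] (P : Measure Ω)
    (ξ : ℕ → Ω → ℝ≥0∞) (hmeas : ∀ n, Measurable (ξ n))
    (hind : ProbabilityTheory.iIndepFun ξ P) :
    ∀ᵐ ω ∂P, Filter.liminf (fun n => ξ n ω) atTop ≤
      Filter.liminf (fun n => ∫⁻ ω', ξ n ω' ∂P) atTop :=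
  ae_le_of_forall_lt_ae_le fun _ hc => ae_liminf_le_of_liminf_lintegral_lt hmeas hind hc

/-- For a sequence of independent nonnegative random variables,
`liminf ξ_n ≤ liminf E(ξ_n)` almost surely. -/
theorem stmt8 {Ω : Type*} [MeasurableSpace Ω] (P : Measure Ω) [IsProbabilityMeasure P]
    (ξ : ℕ → Ω → ℝ≥0∞) (hmeas : ∀ n, Measurable (ξ n))
    (hind : ProbabilityTheory.iIndepFun ξ P) :
    ∀ᵐ ω ∂P, Filter.liminf (fun n => ξ n ω) atTop ≤
      Filter.liminf (fun n => ∫⁻ ω', ξ n ω' ∂P) atTop :=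
  stmt8_general P ξ hmeas hind
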